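/- If G is a finite perfect POEC group of order p1^{a1}·...·pk^{ak} (p_i distinct primes), then a_i ≥ 2 for every i, i.e., p^2 divides |G| for every prime p dividing |G|. -/

import Mathlib

def POEC (G : Type*) [Group G] : Prop :=
  ∀ x y : G, (orderOf x).Prime → (orderOf y).Prime → Commute x y

/-! Suppose `p ∣ |G|` but `p² ∤ |G|`, and let `x` have order `p`. In a POEC group the conjugates
of `x` commute and have order `p`, so they generate an elementary abelian normal `p`-subgroup,
which must be `⟨x⟩` of order `p`. Its automorphism group is abelian, so the perfect group `G`
centralizes it and `x` is central. Finally the transfer `G → Z(G)`, `g ↦ g ^ [G : Z(G)]`, is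
trivial on a perfect group, so `p` divides both `|Z(G)|` and `[G : Z(G)]`. -/

section

open Subgroup hiding commutator

variable {G : Type*} [Group G]

theorem Subgroup.pow_eq_one_of_mem_closure {S : Set G} {n : ℕ}
    (hcomm : ∀ x ∈ S, ∀ y ∈ S, x * y = y * x) (hpow : ∀ s ∈ S, s ^ n = 1) {a : G}
    (ha : a ∈ closure S) : a ^ n = 1 := by
  have := isMulCommutative_closure hcomm
  induction ha using closure_induction with
  | mem s hs => exact hpow s hs
  | one => exact one_pow n
  | mul u v hu hv hun hvn =>
    rw [(show Commute u v from setLike_mul_comm hu hv).mul_pow, hun, hvn, one_mul]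
  | inv u _ hun => rw [inv_pow, hun, inv_one]

theorem POEC.isPGroup_normalClosure_singleton (h : POEC G) {p : ℕ} (hp : p.Prime) {x : G}
    (hx : orderOf x = p) : IsPGroup p (normalClosure {x}) := by
  have horder : ∀ y ∈ Group.conjugatesOfSet {x}, orderOf y = p := by
    intro y hy
    obtain ⟨_, hmem, hxy⟩ := Group.mem_conjugatesOfSet_iff.1 hy
    obtain ⟨g, rfl⟩ := isConj_iff.1 (Set.mem_singleton_iff.1 hmem ▸ hxy)
    rw [← hx]
    exact (MulAut.conj g).orderOf_eq x
  have hpow : ∀ a ∈ normalClosure {x}, a ^ p = 1 := fun a ha =>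
    pow_eq_one_of_mem_closure
      (fun y hy z hz => (h y z (horder y hy ▸ hp) (horder z hz ▸ hp)).eq)
      (fun y hy => horder y hy ▸ pow_orderOf_eq_one y) ha
  exact fun a => ⟨1, Subtype.ext (by simpa using hpow a a.2)⟩

theorem IsPGroup.card_eq_of_not_sq_dvd [Finite G] {p : ℕ} [Fact p.Prime] {H : Subgroup G}
    (hH : IsPGroup p H) (hpH : p ∣ Nat.card H) (hsq : ¬p ^ 2 ∣ Nat.card G) : Nat.card H = p := by
  obtain ⟨n, hn⟩ := hH.exists_card_eq
  have hn0 : n ≠ 0 := by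
    rintro rfl
    rw [hn, pow_zero, Nat.dvd_one] at hpH
    exact (Fact.out : p.Prime).ne_one hpH
  have hn2 : n < 2 := by
    by_contra! h2
    exact hsq ((pow_dvd_pow p h2).trans (hn ▸ card_subgroup_dvd_card H))
  rw [hn, show n = 1 by omega, pow_one]

theorem Subgroup.le_center_of_isCyclic_of_commutator_eq_top (hperf : _root_.commutator G = ⊤)
    (N : Subgroup G) [N.Normal] [IsCyclic N] : N ≤ center G := by
  let f : G →* (ZMod (Nat.card N))ˣ :=
    (IsCyclic.mulAutMulEquiv N).toMonoidHom.comp MulAut.conjNormal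
  have hf : ∀ g, f g = 1 := fun g =>
    (hperf ▸ Abelianization.commutator_subset_ker f) (mem_top g)
  intro n hn
  rw [mem_center_iff]
  intro g
  have hconj : MulAut.conjNormal g = 1 :=
    (IsCyclic.mulAutMulEquiv N).injective (by simpa [f] using hf g)
  have := congrArg Subtype.val (DFunLike.congr_fun hconj ⟨n, hn⟩)
  simp only [MulAut.conjNormal_apply, MulAut.one_apply] at this
  exact mul_inv_eq_iff_eq_mul.mp this

open scoped IsMulCommutative in
theorem pow_index_center_eq_one_of_commutator_eq_top (hperf : commutator G = ⊤)
    [(center G).FiniteIndex] (g : G) : g ^ (center G).index = 1 := by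
  have h1 : MonoidHom.transferCenterPow G g = 1 :=
    (hperf ▸ Abelianization.commutator_subset_ker _) (mem_top g)
  rw [← MonoidHom.transferCenterPow_apply, h1, OneMemClass.coe_one]

theorem sq_orderOf_dvd_card_of_mem_center_of_commutator_eq_top [Finite G]
    (hperf : commutator G = ⊤) {z : G} (hz : z ∈ center G) : orderOf z ^ 2 ∣ Nat.card G := by
  have hcard : orderOf z ∣ Nat.card (center G) := by
    rw [← Subgroup.orderOf_mk z hz]
    exact orderOf_dvd_natCard _
  have hindex : orderOf z ∣ (center G).index :=
    orderOf_dvd_of_pow_eq_one (pow_index_center_eq_one_of_commutator_eq_top hperf z)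
  rw [← card_mul_index (center G), sq]
  exact mul_dvd_mul hcard hindex

end

theorem stmt_16 {G : Type*} [Group G] [Finite G] (h : POEC G)
    (hperf : commutator G = ⊤) :
    ∀ p : ℕ, p.Prime → p ∣ Nat.card G → p ^ 2 ∣ Nat.card G := by
  intro p hp hpG
  by_contra hsq
  have := Fact.mk hp
  obtain ⟨x, hx⟩ := exists_prime_orderOf_dvd_card' p hpG
  have hxN : x ∈ Subgroup.normalClosure {x} := Subgroup.subset_normalClosure rfl
  have hpN : p ∣ Nat.card (Subgroup.normalClosure {x}) := by
    rw [← hx, ← Subgroup.orderOf_mk x hxN]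
    exact orderOf_dvd_natCard _
  have := isCyclic_of_prime_card
    ((h.isPGroup_normalClosure_singleton hp hx).card_eq_of_not_sq_dvd hpN hsq)
  have hxZ : x ∈ Subgroup.center G :=
    Subgroup.le_center_of_isCyclic_of_commutator_eq_top hperf _ hxN
  exact hsq (hx ▸ sq_orderOf_dvd_card_of_mem_center_of_commutator_eq_top hperf hxZ)
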